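/- (Dissipative energy-flux rate, equation (6.2).) Let ρ₀ > 0 be a constant and let e : ℝ × ℝ → ℝ be smooth (internal energy as a function of strain and entropy). Let u, s, q : ℝ × ℝ → ℝ be smooth (displacement, entropy density, heat flux). Define v = ∂ₜu, the stress S(x,t) = ρ₀·∂₁e(∂ₓu(x,t), s(x,t)), the temperature θ(x,t) = ∂₂e(∂ₓu(x,t), s(x,t)), the total energy I = e(∂ₓu, s) + v²/2, the elastic modulus c(x,t) = ρ₀·∂₁₁e(∂ₓu(x,t), s(x,t)), and the dissipation rate Ḋ = ρ₀·∂₁₂e(∂ₓu, s)·v·∂ₜs + ∂ₓs·( S·∂₁₂e(∂ₓu, s) − θ·ρ₀·∂₁₁e(∂ₓu, s) ) − ∂ₜq. If the balance of momentum ρ₀·∂ₜv = ∂ₓS holds at every point, then the rate of change of the total energy flux satisfies ∂ₜ( v·S − q ) = c·∂ₓI + Ḋ at every point. -/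

import Mathlib

open MeasureTheory

/-- Partial derivative in the first variable. -/
noncomputable def dX (f : ℝ × ℝ → ℝ) : ℝ × ℝ → ℝ := fun p => deriv (fun x => f (x, p.2)) p.1

/-- Partial derivative in the second variable. -/
noncomputable def dT (f : ℝ × ℝ → ℝ) : ℝ × ℝ → ℝ := fun p => deriv (fun t => f (p.1, t)) p.2

lemma hasDerivAt_sliceX {f : ℝ × ℝ → ℝ} (hf : DifferentiableAt ℝ f (x, t)) :
    HasDerivAt (fun x' => f (x', t)) (fderiv ℝ f (x, t) (1, 0)) x := by
  have hg : HasDerivAt (fun x' : ℝ => (x', t)) ((1 : ℝ), (0 : ℝ)) x :=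
    (hasDerivAt_id x).prodMk (hasDerivAt_const x t)
  exact hf.hasFDerivAt.comp_hasDerivAt x hg

lemma hasDerivAt_sliceT {f : ℝ × ℝ → ℝ} (hf : DifferentiableAt ℝ f (x, t)) :
    HasDerivAt (fun t' => f (x, t')) (fderiv ℝ f (x, t) (0, 1)) t := by
  have hg : HasDerivAt (fun t' : ℝ => (x, t')) ((0 : ℝ), (1 : ℝ)) t :=
    (hasDerivAt_const t x).prodMk (hasDerivAt_id t)
  exact hf.hasFDerivAt.comp_hasDerivAt t hg

lemma dX_eq {f : ℝ × ℝ → ℝ} (hf : DifferentiableAt ℝ f (x, t)) :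
    dX f (x, t) = fderiv ℝ f (x, t) (1, 0) := (hasDerivAt_sliceX hf).deriv

lemma dT_eq {f : ℝ × ℝ → ℝ} (hf : DifferentiableAt ℝ f (x, t)) :
    dT f (x, t) = fderiv ℝ f (x, t) (0, 1) := (hasDerivAt_sliceT hf).deriv

lemma hasDerivAt_dX {f : ℝ × ℝ → ℝ} (hf : DifferentiableAt ℝ f (x, t)) :
    HasDerivAt (fun x' => f (x', t)) (dX f (x, t)) x := by
  rw [dX_eq hf]; exact hasDerivAt_sliceX hf

lemma hasDerivAt_dT {f : ℝ × ℝ → ℝ} (hf : DifferentiableAt ℝ f (x, t)) :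
    HasDerivAt (fun t' => f (x, t')) (dT f (x, t)) t := by
  rw [dT_eq hf]; exact hasDerivAt_sliceT hf

/-- fderiv applied to a general vector, in terms of dX and dT. -/
lemma fderiv_apply_eq {F : ℝ × ℝ → ℝ} (hF : DifferentiableAt ℝ F (a, b)) (w₁ w₂ : ℝ) :
    fderiv ℝ F (a, b) (w₁, w₂) = dX F (a, b) * w₁ + dT F (a, b) * w₂ := by
  have : (w₁, w₂) = w₁ • ((1 : ℝ), (0 : ℝ)) + w₂ • ((0 : ℝ), (1 : ℝ)) := by
    simp [Prod.ext_iff]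
  rw [this, map_add, _root_.map_smul, _root_.map_smul, dX_eq hF, dT_eq hF]
  simp [mul_comm]

/-- Chain rule for the T-slice of F ∘ (a, b). -/
lemma hasDerivAt_compT {F a b : ℝ × ℝ → ℝ} (hF : Differentiable ℝ F)
    (ha : Differentiable ℝ a) (hb : Differentiable ℝ b) (x t : ℝ) :
    HasDerivAt (fun t' => F (a (x, t'), b (x, t')))
      (dX F (a (x, t), b (x, t)) * dT a (x, t) + dT F (a (x, t), b (x, t)) * dT b (x, t)) t := by
  have hin : HasDerivAt (fun t' => (a (x, t'), b (x, t'))) (dT a (x, t), dT b (x, t)) t :=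
    (hasDerivAt_dT (ha _)).prodMk (hasDerivAt_dT (hb _))
  have := (hF (a (x, t), b (x, t))).hasFDerivAt.comp_hasDerivAt t hin
  rwa [fderiv_apply_eq (hF _)] at this

lemma hasDerivAt_compX {F a b : ℝ × ℝ → ℝ} (hF : Differentiable ℝ F)
    (ha : Differentiable ℝ a) (hb : Differentiable ℝ b) (x t : ℝ) :
    HasDerivAt (fun x' => F (a (x', t), b (x', t)))
      (dX F (a (x, t), b (x, t)) * dX a (x, t) + dT F (a (x, t), b (x, t)) * dX b (x, t)) x := by
  have hin : HasDerivAt (fun x' => (a (x', t), b (x', t))) (dX a (x, t), dX b (x, t)) x :=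
    (hasDerivAt_dX (ha _)).prodMk (hasDerivAt_dX (hb _))
  have := (hF (a (x, t), b (x, t))).hasFDerivAt.comp_hasDerivAt x hin
  rwa [fderiv_apply_eq (hF _)] at this

lemma contDiff_dX {f : ℝ × ℝ → ℝ} (hf : ContDiff ℝ (⊤ : ℕ∞) f) : ContDiff ℝ (⊤ : ℕ∞) (dX f) := by
  have h : dX f = fun p => fderiv ℝ f p (1, 0) := by
    funext p
    obtain ⟨x, t⟩ := p
    exact dX_eq ((hf.differentiable (by simp)) _)
  rw [h]
  exact (hf.fderiv_right (by simp)).clm_apply contDiff_const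

lemma contDiff_dT {f : ℝ × ℝ → ℝ} (hf : ContDiff ℝ (⊤ : ℕ∞) f) : ContDiff ℝ (⊤ : ℕ∞) (dT f) := by
  have h : dT f = fun p => fderiv ℝ f p (0, 1) := by
    funext p
    obtain ⟨x, t⟩ := p
    exact dT_eq ((hf.differentiable (by simp)) _)
  rw [h]
  exact (hf.fderiv_right (by simp)).clm_apply contDiff_const

/-- Clairaut: mixed partials commute for C^∞ functions. -/
lemma dT_dX_comm {f : ℝ × ℝ → ℝ} (hf : ContDiff ℝ (⊤ : ℕ∞) f) (p : ℝ × ℝ) :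
    dT (dX f) p = dX (dT f) p := by
  obtain ⟨x, t⟩ := p
  have hdf : Differentiable ℝ f := hf.differentiable (by simp)
  have hfd : ContDiff ℝ (⊤ : ℕ∞) (fderiv ℝ f) := hf.fderiv_right (by simp)
  have hX : dX f = fun p => fderiv ℝ f p (1, 0) := by
    funext p; obtain ⟨a, b⟩ := p; exact dX_eq (hdf _)
  have hT : dT f = fun p => fderiv ℝ f p (0, 1) := by
    funext p; obtain ⟨a, b⟩ := p; exact dT_eq (hdf _)
  have hsym : IsSymmSndFDerivAt ℝ f (x, t) := hf.contDiffAt.isSymmSndFDerivAt (by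
    simp only [minSmoothness_of_isRCLikeNormedField]; exact WithTop.coe_le_coe.mpr (le_top : (2 : ℕ∞) ≤ ⊤))
  have key : ∀ w₁ w₂ : ℝ × ℝ, fderiv ℝ (fun p => fderiv ℝ f p w₁) (x, t) w₂
      = fderiv ℝ (fderiv ℝ f) (x, t) w₂ w₁ := by
    intro w₁ w₂
    rw [fderiv_clm_apply (hfd.differentiable (by simp)).differentiableAt
      (differentiableAt_const w₁)]
    simp
  rw [hX, hT, dT_eq (((hfd.differentiable (by simp)).clm_apply (differentiable_const _)) _),
    dX_eq (((hfd.differentiable (by simp)).clm_apply (differentiable_const _)) _),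
    key, key, hsym.eq]

/-- Equation (6.2) (dissipative energy-flux rate): for a thermoelastic medium with
internal energy e(∂ₓu, s), the rate of change of the total energy flux vS − q equals
c ∂ₓI + Ḋ, where Ḋ collects the dissipative (entropy and heat-flux) contributions.
Here dX e = ∂₁e, dT e = ∂₂e, dX (dX e) = ∂₁₁e, dT (dX e) = ∂₁₂e. -/
theorem dissipative_energy_flux_rate (ρ₀ : ℝ) (hρ : 0 < ρ₀)
    (e : ℝ × ℝ → ℝ) (he : ContDiff ℝ (⊤ : ℕ∞) e)
    (u s q : ℝ × ℝ → ℝ)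
    (hu : ContDiff ℝ (⊤ : ℕ∞) u) (hs : ContDiff ℝ (⊤ : ℕ∞) s) (hq : ContDiff ℝ (⊤ : ℕ∞) q)
    (v S θ I c D : ℝ × ℝ → ℝ)
    (hv : v = dT u)
    (hS : S = fun p => ρ₀ * dX e (dX u p, s p))
    (hθ : θ = fun p => dT e (dX u p, s p))
    (hI : I = fun p => e (dX u p, s p) + (v p) ^ 2 / 2)
    (hc : c = fun p => ρ₀ * dX (dX e) (dX u p, s p))
    (hD : D = fun p => ρ₀ * dT (dX e) (dX u p, s p) * v p * dT s p
        + dX s p * (S p * dT (dX e) (dX u p, s p) - θ p * (ρ₀ * dX (dX e) (dX u p, s p)))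
        - dT q p)
    (hmom : ∀ p : ℝ × ℝ, ρ₀ * dT v p = dX S p) :
    ∀ p : ℝ × ℝ, dT (fun r => v r * S r - q r) p = c p * dX I p + D p := by
  rintro ⟨x, t⟩
  -- smoothness
  have hw : ContDiff ℝ (⊤ : ℕ∞) (dX u) := contDiff_dX hu
  have hv' : ContDiff ℝ (⊤ : ℕ∞) v := hv ▸ contDiff_dT hu
  have hdXe : ContDiff ℝ (⊤ : ℕ∞) (dX e) := contDiff_dX he
  have hScd : ContDiff ℝ (⊤ : ℕ∞) S := by
    rw [hS]; exact contDiff_const.mul (hdXe.comp (hw.prodMk hs))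
  have hwD : Differentiable ℝ (dX u) := hw.differentiable (by simp)
  have hsD : Differentiable ℝ s := hs.differentiable (by simp)
  have hvD : Differentiable ℝ v := hv'.differentiable (by simp)
  have hdXeD : Differentiable ℝ (dX e) := hdXe.differentiable (by simp)
  have heD : Differentiable ℝ e := he.differentiable (by simp)
  -- step 1: Leibniz for the flux
  have h1 : dT (fun r => v r * S r - q r) (x, t)
      = dT v (x, t) * S (x, t) + v (x, t) * dT S (x, t) - dT q (x, t) :=
    (((hasDerivAt_dT (hvD _)).mul (hasDerivAt_dT ((hScd.differentiable (by simp)) _))).sub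
      (hasDerivAt_dT ((hq.differentiable (by simp)) _))).deriv
  -- dT S
  have hdTS : dT S (x, t) = ρ₀ * (dX (dX e) (dX u (x, t), s (x, t)) * dT (dX u) (x, t)
      + dT (dX e) (dX u (x, t), s (x, t)) * dT s (x, t)) := by
    rw [hS]
    exact ((hasDerivAt_compT hdXeD hwD hsD x t).const_mul ρ₀).deriv
  -- dX S
  have hdXS : dX S (x, t) = ρ₀ * (dX (dX e) (dX u (x, t), s (x, t)) * dX (dX u) (x, t)
      + dT (dX e) (dX u (x, t), s (x, t)) * dX s (x, t)) := by
    rw [hS]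
    exact ((hasDerivAt_compX hdXeD hwD hsD x t).const_mul ρ₀).deriv
  -- dX I
  have hdXI : dX I (x, t) = dX e (dX u (x, t), s (x, t)) * dX (dX u) (x, t)
      + dT e (dX u (x, t), s (x, t)) * dX s (x, t) + v (x, t) * dX v (x, t) := by
    rw [hI]
    have h2 := ((hasDerivAt_compX heD hwD hsD x t).add
      (((hasDerivAt_dX (hvD (x, t))).pow 2).div_const 2)).deriv
    exact h2.trans (by push_cast; ring)
  -- Clairaut + momentum
  have hcl : dT (dX u) (x, t) = dX v (x, t) := by rw [hv]; exact dT_dX_comm hu (x, t)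
  have hdtv : dT v (x, t) = dX (dX e) (dX u (x, t), s (x, t)) * dX (dX u) (x, t)
      + dT (dX e) (dX u (x, t), s (x, t)) * dX s (x, t) := by
    have := hmom (x, t)
    rw [hdXS] at this
    exact mul_left_cancel₀ (ne_of_gt hρ) this
  rw [h1, hdTS, hdXI, hcl, hdtv, hc, hD, hθ, hS]
  ring
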